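/- arXiv:math/0310028 — 5 statements merged into one kernel-verified Lean document; each statement's English description precedes it below -/
import Mathlib

section
/- Let S be a semiring, μ : Σ_r^* → S^{n×n} a monoid morphism, and define κ : {b,c}^* → S^{rn×rn} with κ(b) = [0_{n,(r-1)n} blocks stacked with μ(a_1),...,μ(a_r) in first block column] as in the first embedding, and the coding δ(a_{i_1}...a_{i_k}) = c^{i_1-1}b···c^{i_k-1}b. Then for all z ∈ Σ_r^*, κ(δ(a_r z)) = diag(μ(a_r z), 0_{(r-1)n×(r-1)n}), i.e. the block matrix with μ(a_r z) in the top-left n×n block and zeros elsewhere. -/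
/-!
Write `col g` for the block matrix whose first block column is `g 0, g 1, …, g r` and whose
other blocks vanish. Then `κ(b) = col (j ↦ μ(a_j))`, left multiplication by `κ(c)` shifts a
block column up by one, and `col g * col h = col (j ↦ g j * h 0)`. Hence by induction on `z`,
`κ(δ(a_i z)) = col (j ↦ μ(a_{j+i} z))` with `μ(a_m ⋯) = 0` for `m > r`. For the last letter
`i = r` only the block `j = 0` survives.
-/

open Matrix

/-- Images of the two generators `b` (letter `0`) and `c` (letter `1`) under the
first embedding: `κ(b)` has block rows `[μ(a_i), 0]` for `i = 1,…,r+1`, and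
`κ(c) = [0, I_{rn}; 0, 0]`. Here the alphabet is `Fin (r+1)`, so the number of
letters is `r+1 ≥ 1`, and the last letter is `Fin.last r`. -/
def firstEmbGen {S : Type*} [Semiring S] {r n : ℕ}
    (μ : FreeMonoid (Fin (r + 1)) →* Matrix (Fin n) (Fin n) S) :
    Fin 2 → Matrix (Fin (r + 1) × Fin n) (Fin (r + 1) × Fin n) S := fun x =>
  if x = 0 then
    Matrix.of fun p q => if q.1 = 0 then μ (FreeMonoid.of p.1) p.2 q.2 else 0
  else
    Matrix.of fun p q => if (q.1 : ℕ) = (p.1 : ℕ) + 1 ∧ p.2 = q.2 then 1 else 0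

/-- The first embedding `κ : {b,c}^* → S^{(r+1)n×(r+1)n}`. -/
def firstEmb {S : Type*} [Semiring S] {r n : ℕ}
    (μ : FreeMonoid (Fin (r + 1)) →* Matrix (Fin n) (Fin n) S) :
    FreeMonoid (Fin 2) →* Matrix (Fin (r + 1) × Fin n) (Fin (r + 1) × Fin n) S :=
  FreeMonoid.lift (firstEmbGen μ)

/-- The coding `δ(a_{i_1}⋯a_{i_k}) = c^{i_1-1}b ⋯ c^{i_k-1}b` (`b = 0`, `c = 1`,
letters of `Σ_{r+1}` are `0`-indexed). -/
def coding {r : ℕ} : FreeMonoid (Fin (r + 1)) →* FreeMonoid (Fin 2) :=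
  FreeMonoid.lift fun i => (FreeMonoid.of (1 : Fin 2)) ^ (i : ℕ) * FreeMonoid.of (0 : Fin 2)

section FirstBlockCol

variable {S : Type*} [Semiring S] {r n : ℕ}
  (μ : FreeMonoid (Fin (r + 1)) →* Matrix (Fin n) (Fin n) S) (z : FreeMonoid (Fin (r + 1)))

/-- Blocks are indexed by `ℕ` so that shifting needs no bound; indices beyond `r` are ignored. -/
def firstBlockCol (g : ℕ → Matrix (Fin n) (Fin n) S) :
    Matrix (Fin (r + 1) × Fin n) (Fin (r + 1) × Fin n) S :=
  of fun p q => if q.1 = 0 then g p.1 p.2 q.2 else 0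

theorem firstBlockCol_mul_firstBlockCol (g h : ℕ → Matrix (Fin n) (Fin n) S) :
    (firstBlockCol g : Matrix (Fin (r + 1) × Fin n) _ S) * firstBlockCol h =
      firstBlockCol fun j => g j * h 0 := by
  ext ⟨j, p⟩ ⟨l, q⟩
  by_cases hl : l = 0 <;> simp [firstBlockCol, mul_apply, Fintype.sum_prod_type, hl]

theorem firstEmbGen_one_mul_firstBlockCol
    {g : ℕ → Matrix (Fin n) (Fin n) S} (hg : ∀ m, r < m → g m = 0) :
    firstEmbGen μ 1 * firstBlockCol g = firstBlockCol fun j => g (j + 1) := by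
  ext ⟨j, p⟩ ⟨l, q⟩
  have hsum : ∑ m : Fin (r + 1), (if (m : ℕ) = j + 1 then g m p q else 0) = g (j + 1) p q := by
    rw [Fin.sum_univ_eq_sum_range (fun m => if m = (j : ℕ) + 1 then g m p q else 0),
      Finset.sum_ite_eq', ite_eq_left_iff, Finset.mem_range]
    intro hj
    simp [hg (j + 1) (by omega)]
  simp [firstEmbGen, firstBlockCol, mul_apply, Fintype.sum_prod_type, ite_and, hsum]

theorem firstEmbGen_one_pow_mul_firstBlockCol
    {g : ℕ → Matrix (Fin n) (Fin n) S} (hg : ∀ m, r < m → g m = 0) (k : ℕ) :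
    firstEmbGen μ 1 ^ k * firstBlockCol g = firstBlockCol fun j => g (j + k) := by
  induction k with
  | zero => simp
  | succ k ih =>
    rw [pow_succ', mul_assoc, ih, firstEmbGen_one_mul_firstBlockCol μ fun m hm => hg _ (by omega)]
    simp only [add_assoc, add_comm 1 k]

def letterMatrix (m : ℕ) : Matrix (Fin n) (Fin n) S :=
  if h : m < r + 1 then μ (FreeMonoid.of ⟨m, h⟩ * z) else 0

theorem letterMatrix_eq_zero {m : ℕ} (hm : r < m) : letterMatrix μ z m = 0 :=
  dif_neg (by omega)

theorem letterMatrix_val (i : Fin (r + 1)) : letterMatrix μ z i = μ (FreeMonoid.of i * z) :=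
  dif_pos i.isLt

theorem letterMatrix_one_mul (m : ℕ) : letterMatrix μ 1 m * μ z = letterMatrix μ z m := by
  unfold letterMatrix
  split_ifs <;> simp

theorem firstEmbGen_zero : firstEmbGen μ 0 = firstBlockCol (letterMatrix μ 1) := by
  ext ⟨j, p⟩ ⟨l, q⟩
  simp [firstEmbGen, firstBlockCol, letterMatrix_val]

theorem firstEmb_coding_of (i : Fin (r + 1)) :
    firstEmb μ (coding (FreeMonoid.of i)) = firstBlockCol fun j => letterMatrix μ 1 (j + i) := by
  rw [coding, FreeMonoid.lift_eval_of, map_mul, map_pow, firstEmb, FreeMonoid.lift_eval_of,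
    FreeMonoid.lift_eval_of, firstEmbGen_zero,
    firstEmbGen_one_pow_mul_firstBlockCol μ fun m => letterMatrix_eq_zero μ 1]

theorem firstEmb_coding_of_mul (i : Fin (r + 1)) :
    firstEmb μ (coding (FreeMonoid.of i * z)) =
      firstBlockCol fun j => letterMatrix μ z (j + i) := by
  induction z using FreeMonoid.inductionOn' generalizing i with
  | one => rw [mul_one, firstEmb_coding_of]
  | of_mul i' z ih =>
    rw [map_mul coding, map_mul, ih, firstEmb_coding_of, firstBlockCol_mul_firstBlockCol]
    simp only [zero_add, letterMatrix_val, letterMatrix_one_mul]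

end FirstBlockCol

/-- For any word beginning with the last letter `a_{r+1}`,
`κ(δ(a_{r+1} z)) = diag(μ(a_{r+1} z), 0)`: the top-left `n×n` block is
`μ(a_{r+1} z)` and all other blocks vanish. -/
theorem firstEmb_last_letter {S : Type*} [Semiring S] {r n : ℕ}
    (μ : FreeMonoid (Fin (r + 1)) →* Matrix (Fin n) (Fin n) S)
    (z : FreeMonoid (Fin (r + 1))) (j l : Fin (r + 1)) (p q : Fin n) :
    firstEmb μ (coding (FreeMonoid.of (Fin.last r) * z)) (j, p) (l, q)
      = if j = 0 ∧ l = 0 then μ (FreeMonoid.of (Fin.last r) * z) p q else 0 := by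
  rw [firstEmb_coding_of_mul]
  by_cases hj : j = 0
  · subst hj
    simp [firstBlockCol, ← letterMatrix_val]
  · have hr : r < (j : ℕ) + r := by have := Fin.val_ne_zero_iff.mpr hj; omega
    simp [firstBlockCol, hj, letterMatrix_eq_zero μ z hr]
end

section
/- Let S be a semiring, μ : Σ_r^* → S^{n×n} a monoid morphism, α, η ∈ S^{1×n}, with η ≠ 0. Define μ' : Σ_{r+1}^* → S^{(n+1)×(n+1)} by μ'(a_{r+1}) = [1, 0_{1×n}; 0_{n×1}, 0_{n×n}] and μ'(a_i) = [0, α μ(a_i); 0_{n×1}, μ(a_i)] for 1 ≤ i ≤ r, and let M_η = [0, η; 0_{n×1}, 0_{n×n}]. Then there exists w ∈ Σ_r^+ with α μ(w) = η if and only if there exists z ∈ Σ_{r+1}^+ with μ'(z) = M_η. -/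
/-! Every `μ'(z)` is `1`, `0`, `E = [1, 0; 0, 0]`, `[0, αμ(w); 0, μ(w)]` or `[0, αμ(w); 0, 0]`
for some nonempty `w`, because this set contains `1` and is closed under left multiplication by
the generators. Of these matrices only the last can equal `M_η` with `η ≠ 0`, and then
`αμ(w) = η`. Conversely, `a_{r+1} w` is sent to `E · [0, αμ(w); 0, μ(w)] = M_{αμ(w)}`. -/

open Matrix

/-- Generator images for the reduction of vector reachability to matrix
reachability: the extra letter `a_{r+1}` (here `Fin.last r`) goes to
`[1, 0; 0, 0]` and each original letter `a_i` to `[0, αμ(a_i); 0, μ(a_i)]`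
(blocks of sizes `1` and `n`). -/
def vecToMatGen {S : Type*} [Semiring S] {r n : ℕ}
    (μ : FreeMonoid (Fin r) →* Matrix (Fin n) (Fin n) S)
    (α : Matrix (Fin 1) (Fin n) S) :
    Fin (r + 1) → Matrix (Fin 1 ⊕ Fin n) (Fin 1 ⊕ Fin n) S := fun i =>
  Fin.lastCases (Matrix.fromBlocks 1 0 0 0)
    (fun j => Matrix.fromBlocks 0 (α * μ (FreeMonoid.of j)) 0 (μ (FreeMonoid.of j))) i

theorem FreeMonoid.of_mul_ne_one {α : Type*} (a : α) (w : FreeMonoid α) : of a * w ≠ 1 :=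
  fun h => by simpa using congrArg toList h

section VecToMat

variable {S : Type*} [Semiring S] {r n : ℕ}
    (μ : FreeMonoid (Fin r) →* Matrix (Fin n) (Fin n) S) (α : Matrix (Fin 1) (Fin n) S)

def vecToMatWord (w : FreeMonoid (Fin r)) : Matrix (Fin 1 ⊕ Fin n) (Fin 1 ⊕ Fin n) S :=
  fromBlocks 0 (α * μ w) 0 (μ w)

def vecToMatMarked (w : FreeMonoid (Fin r)) : Matrix (Fin 1 ⊕ Fin n) (Fin 1 ⊕ Fin n) S :=
  fromBlocks 0 (α * μ w) 0 0

def vecToMatShapes : Set (Matrix (Fin 1 ⊕ Fin n) (Fin 1 ⊕ Fin n) S) :=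
  {M | M = 1 ∨ M = 0 ∨ M = fromBlocks 1 0 0 0 ∨
    ∃ w ≠ 1, M = vecToMatWord μ α w ∨ M = vecToMatMarked μ α w}

@[simp]
theorem vecToMatGen_last : vecToMatGen μ α (Fin.last r) = fromBlocks 1 0 0 0 := by
  simp [vecToMatGen]

@[simp]
theorem vecToMatGen_castSucc (j : Fin r) :
    vecToMatGen μ α j.castSucc = vecToMatWord μ α (FreeMonoid.of j) := by
  simp [vecToMatGen, vecToMatWord]

theorem vecToMatWord_mul (u w : FreeMonoid (Fin r)) :
    vecToMatWord μ α u * vecToMatWord μ α w = vecToMatWord μ α (u * w) := by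
  simp [vecToMatWord, fromBlocks_multiply, Matrix.mul_assoc]

theorem lift_vecToMatGen_map_castSucc {w : FreeMonoid (Fin r)} (hw : w ≠ 1) :
    FreeMonoid.lift (vecToMatGen μ α) (FreeMonoid.map Fin.castSucc w) = vecToMatWord μ α w := by
  induction w using FreeMonoid.inductionOn' with
  | one => exact absurd rfl hw
  | of_mul j w ih =>
    rw [map_mul, map_mul, FreeMonoid.map_of, FreeMonoid.lift_eval_of, vecToMatGen_castSucc]
    rcases eq_or_ne w 1 with rfl | hw
    · simp
    · rw [ih hw, vecToMatWord_mul]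

variable {μ α}

theorem fromBlocks_one_zero_mul_mem_vecToMatShapes
    {M : Matrix (Fin 1 ⊕ Fin n) (Fin 1 ⊕ Fin n) S} (hM : M ∈ vecToMatShapes μ α) :
    fromBlocks 1 0 0 0 * M ∈ vecToMatShapes μ α := by
  rcases hM with rfl | rfl | rfl | ⟨w, hw, rfl | rfl⟩
  · exact Or.inr (Or.inr (Or.inl (mul_one _)))
  · exact Or.inr (Or.inl (mul_zero _))
  · refine Or.inr (Or.inr (Or.inl ?_))
    simp [fromBlocks_multiply]
  · refine Or.inr (Or.inr (Or.inr ⟨w, hw, Or.inr ?_⟩))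
    simp [vecToMatWord, vecToMatMarked, fromBlocks_multiply]
  · refine Or.inr (Or.inr (Or.inr ⟨w, hw, Or.inr ?_⟩))
    simp [vecToMatMarked, fromBlocks_multiply]

theorem vecToMatWord_of_mul_mem_vecToMatShapes (j : Fin r)
    {M : Matrix (Fin 1 ⊕ Fin n) (Fin 1 ⊕ Fin n) S} (hM : M ∈ vecToMatShapes μ α) :
    vecToMatWord μ α (FreeMonoid.of j) * M ∈ vecToMatShapes μ α := by
  rcases hM with rfl | rfl | rfl | ⟨w, hw, rfl | rfl⟩
  · exact Or.inr (Or.inr (Or.inr ⟨_, FreeMonoid.of_ne_one j, Or.inl (mul_one _)⟩))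
  · exact Or.inr (Or.inl (mul_zero _))
  · refine Or.inr (Or.inl ?_)
    simp [vecToMatWord, fromBlocks_multiply]
  · rw [vecToMatWord_mul]
    exact Or.inr (Or.inr (Or.inr ⟨_, FreeMonoid.of_mul_ne_one j w, Or.inl rfl⟩))
  · refine Or.inr (Or.inl ?_)
    simp [vecToMatWord, vecToMatMarked, fromBlocks_multiply]

theorem lift_vecToMatGen_mem_vecToMatShapes (z : FreeMonoid (Fin (r + 1))) :
    FreeMonoid.lift (vecToMatGen μ α) z ∈ vecToMatShapes μ α := by
  induction z using FreeMonoid.inductionOn' with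
  | one => exact Or.inl (map_one _)
  | of_mul i z ih =>
    rw [map_mul, FreeMonoid.lift_eval_of]
    induction i using Fin.lastCases with
    | last =>
      rw [vecToMatGen_last]
      exact fromBlocks_one_zero_mul_mem_vecToMatShapes ih
    | cast j =>
      rw [vecToMatGen_castSucc]
      exact vecToMatWord_of_mul_mem_vecToMatShapes j ih

theorem exists_ne_one_mul_eq_of_fromBlocks_mem_vecToMatShapes {η : Matrix (Fin 1) (Fin n) S}
    (hη : η ≠ 0) (h : fromBlocks 0 η 0 0 ∈ vecToMatShapes μ α) :
    ∃ w ≠ 1, α * μ w = η := by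
  rcases h with h | h | h | ⟨w, hw, h | h⟩
  · rw [← fromBlocks_one, fromBlocks_inj] at h
    exact absurd h.2.1 hη
  · rw [← fromBlocks_zero, fromBlocks_inj] at h
    exact absurd h.2.1 hη
  · rw [fromBlocks_inj] at h
    exact absurd h.2.1 hη
  · obtain ⟨-, hαw, -, hw0⟩ := fromBlocks_inj.1 h
    rw [← hw0, Matrix.mul_zero] at hαw
    exact absurd hαw hη
  · exact ⟨w, hw, (fromBlocks_inj.1 h).2.1.symm⟩

end VecToMat

/-- Reduction of vector reachability with nonzero target `η` to matrix
reachability: `∃ w ∈ Σ_r^+, αμ(w) = η` iff `∃ z ∈ Σ_{r+1}^+, μ'(z) = M_η`,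
where `M_η = [0, η; 0, 0]`. -/
theorem vector_to_matrix {S : Type*} [Semiring S] {r n : ℕ}
    (μ : FreeMonoid (Fin r) →* Matrix (Fin n) (Fin n) S)
    (α η : Matrix (Fin 1) (Fin n) S) (hη : η ≠ 0) :
    (∃ w : FreeMonoid (Fin r), w ≠ 1 ∧ α * μ w = η) ↔
    (∃ z : FreeMonoid (Fin (r + 1)), z ≠ 1 ∧
      FreeMonoid.lift (vecToMatGen μ α) z = Matrix.fromBlocks 0 η 0 0) := by
  constructor
  · rintro ⟨w, hw, rfl⟩
    refine ⟨FreeMonoid.of (Fin.last r) * FreeMonoid.map Fin.castSucc w,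
      FreeMonoid.of_mul_ne_one _ _, ?_⟩
    rw [map_mul, FreeMonoid.lift_eval_of, lift_vecToMatGen_map_castSucc μ α hw,
      vecToMatGen_last]
    simp [vecToMatWord, fromBlocks_multiply]
  · rintro ⟨z, -, hz⟩
    exact exists_ne_one_mul_eq_of_fromBlocks_mem_vecToMatShapes hη
      (hz ▸ lift_vecToMatGen_mem_vecToMatShapes z)
end

section
/- Let S be a semiring and μ : Σ_r^* → S^{n×n} a monoid morphism. Let vec : S^{n×n} → S^{1×n²} develop a matrix into a row vector row by row, and let μ'' = diag(μ,...,μ) (n copies), so that μ'' : Σ_r^* → S^{n²×n²}. Then vec(μ(a_i w)) = vec(μ(a_i)) · μ''(w) for all letters a_i and words w ∈ Σ_r^*. Consequently, there exists w ∈ Σ_r^+ with μ(w) = M if and only if there exist 1 ≤ k ≤ r and v ∈ Σ_r^* with vec(μ(a_k)) μ''(v) = vec(M). -/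
open Matrix

/-- `vec` develops an `n×n` matrix into a `1×n²` row vector, row by row (the
index `(l, k)` of the column type `Fin n × Fin n` stands for column `l` of row
`k`, matching the `Matrix.blockDiagonal` index convention). -/
def vecRow {S : Type*} [Semiring S] {n : ℕ} (A : Matrix (Fin n) (Fin n) S) :
    Matrix (Fin 1) (Fin n × Fin n) S :=
  Matrix.of fun _ p => A p.2 p.1

lemma vecRow_mul {S : Type*} [Semiring S] {n : ℕ} (A B : Matrix (Fin n) (Fin n) S) :
    vecRow (A * B) = vecRow A * Matrix.blockDiagonal fun _ : Fin n => B := by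
  ext i p
  obtain ⟨l, k⟩ := p
  simp [vecRow, Matrix.mul_apply, Matrix.blockDiagonal_apply, Fintype.sum_prod_type,
    mul_ite, mul_zero, Finset.sum_ite_eq', Finset.sum_ite_eq]

lemma vecRow_injective {S : Type*} [Semiring S] {n : ℕ} :
    Function.Injective (vecRow (S := S) (n := n)) := by
  intro A B h
  ext i j
  have := congrFun (congrFun h 0) (j, i)
  simpa [vecRow] using this

/-- Blondel's reduction of matrix reachability to vector reachability: with
`μ'' = diag(μ, …, μ)` (`n` copies), `vec(μ(a_i w)) = vec(μ(a_i)) · μ''(w)` for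
all letters `a_i` and words `w`; consequently `∃ w ∈ Σ_r^+, μ(w) = M` iff
`∃ k ≤ r, ∃ v ∈ Σ_r^*, vec(μ(a_k)) μ''(v) = vec(M)`. -/
theorem matrix_to_vector {S : Type*} [Semiring S] {r n : ℕ}
    (μ : FreeMonoid (Fin r) →* Matrix (Fin n) (Fin n) S)
    (M : Matrix (Fin n) (Fin n) S) :
    (∀ (a : Fin r) (w : FreeMonoid (Fin r)),
      vecRow (μ (FreeMonoid.of a * w))
        = vecRow (μ (FreeMonoid.of a)) * Matrix.blockDiagonal fun _ : Fin n => μ w) ∧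
    ((∃ w : FreeMonoid (Fin r), w ≠ 1 ∧ μ w = M) ↔
      ∃ (k : Fin r) (v : FreeMonoid (Fin r)),
        vecRow (μ (FreeMonoid.of k)) * (Matrix.blockDiagonal fun _ : Fin n => μ v)
          = vecRow M) := by
  have key : ∀ (a : Fin r) (w : FreeMonoid (Fin r)),
      vecRow (μ (FreeMonoid.of a * w))
        = vecRow (μ (FreeMonoid.of a)) * Matrix.blockDiagonal fun _ : Fin n => μ w := by
    intro a w
    rw [_root_.map_mul, vecRow_mul]
  refine ⟨key, ?_, ?_⟩
  · rintro ⟨w, hw, rfl⟩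
    induction w using FreeMonoid.inductionOn' with
    | one => exact absurd rfl hw
    | of_mul a w _ =>
      exact ⟨a, w, (key a w).symm⟩
  · rintro ⟨k, v, hv⟩
    refine ⟨FreeMonoid.of k * v, ?_, ?_⟩
    · intro h
      have : (FreeMonoid.of k * v).length = 0 := by rw [h]; rfl
      simp [FreeMonoid.length_mul] at this
    · exact vecRow_injective ((key k v).trans hv)
end

section
/- With the notation of the Modified Post Correspondence Problem: given pairs of words (u_i, v_i) (1 ≤ i ≤ r) over {1,...,n}, base b > n, α = ([u_1]_b, [v_1]_b, 1), W(u,v) = [b^{|u|},0,0; 0,b^{|v|},0; [u]_b,[v]_b,1], and T = [1,-1,0;-1,1,0;0,0,0]. Then for all indices 1 ≤ i_2,...,i_k ≤ r: α · W(u_{i_2},v_{i_2}) ··· W(u_{i_k},v_{i_k}) · T = ([u]_b - [v]_b, [v]_b - [u]_b, 0), where u = u_1 u_{i_2}···u_{i_k} and v = v_1 v_{i_2}···v_{i_k}. In particular this vector is zero if and only if [u]_b = [v]_b, if and only if u = v. -/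
open Matrix

/-- `[w]_b`: the integer obtained by reading the word `w` in base `b`. -/
def baseVal (b : ℕ) (w : List ℕ) : ℤ :=
  w.foldl (fun acc x => acc * (b : ℤ) + (x : ℤ)) 0

/-- Paterson's matrix `W(u,v)`. -/
def patersonW (b : ℕ) (u v : List ℕ) : Matrix (Fin 3) (Fin 3) ℤ :=
  !![(b : ℤ) ^ u.length, 0, 0; 0, (b : ℤ) ^ v.length, 0; baseVal b u, baseVal b v, 1]

lemma baseVal_eq_foldl (b : ℕ) (w : List ℕ) :
    baseVal b w = w.foldl (fun acc x => acc * (b : ℤ) + (x : ℕ)) 0 := by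
  unfold baseVal
  rw [bind_pure_comp, List.map_eq_map, List.foldl_map]

lemma foldl_shift (b : ℕ) (w : List ℕ) (acc : ℤ) :
    w.foldl (fun acc x => acc * (b : ℤ) + (x : ℕ)) acc
      = acc * (b : ℤ) ^ w.length + baseVal b w := by
  induction w generalizing acc with
  | nil => simp [baseVal_eq_foldl]
  | cons x w ih =>
    rw [List.foldl_cons, ih, baseVal_eq_foldl b (x :: w), List.foldl_cons, ih,
      List.length_cons]
    ring

lemma baseVal_append (b : ℕ) (A B : List ℕ) :
    baseVal b (A ++ B) = baseVal b A * (b : ℤ) ^ B.length + baseVal b B := by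
  rw [baseVal_eq_foldl, List.foldl_append, ← baseVal_eq_foldl, foldl_shift]

lemma baseVal_singleton (b x : ℕ) : baseVal b [x] = (x : ℤ) := by
  rw [baseVal_eq_foldl]; simp

lemma baseVal_nonneg (b : ℕ) (w : List ℕ) : 0 ≤ baseVal b w := by
  induction w using List.reverseRecOn with
  | nil => simp [baseVal_eq_foldl]
  | append_singleton w x ih =>
    rw [baseVal_append, baseVal_singleton, List.length_singleton, pow_one]
    have h1 : (0:ℤ) ≤ (b:ℤ) := by positivity
    have h2 : (0:ℤ) ≤ (x:ℤ) := by positivity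
    nlinarith

lemma baseVal_pos (b : ℕ) (w : List ℕ) (hw : w ≠ [])
    (hd : ∀ x ∈ w, 1 ≤ x) : 0 < baseVal b w := by
  induction w using List.reverseRecOn with
  | nil => exact absurd rfl hw
  | append_singleton w x ih =>
    rw [baseVal_append, baseVal_singleton, List.length_singleton, pow_one]
    have hx : 1 ≤ x := hd x (by simp)
    have hx' : (1:ℤ) ≤ (x:ℤ) := by exact_mod_cast hx
    have h1 : 0 ≤ baseVal b w := baseVal_nonneg b w
    have h2 : (0:ℤ) ≤ (b:ℤ) := by positivity
    nlinarith

lemma baseVal_inj (n b : ℕ) (hb : n < b) (U V : List ℕ)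
    (hU : ∀ x ∈ U, 1 ≤ x ∧ x ≤ n) (hV : ∀ x ∈ V, 1 ≤ x ∧ x ≤ n)
    (h : baseVal b U = baseVal b V) : U = V := by
  induction U using List.reverseRecOn generalizing V with
  | nil =>
    cases V using List.reverseRecOn with
    | nil => rfl
    | append_singleton w y =>
      exfalso
      have hpos := baseVal_pos b (w ++ [y]) (by simp) (fun z hz => (hV z hz).1)
      have h0 : baseVal b ([] : List ℕ) = 0 := by rw [baseVal_eq_foldl]; simp
      omega
  | append_singleton w x ih =>
    cases V using List.reverseRecOn with
    | nil =>
      exfalso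
      have hpos := baseVal_pos b (w ++ [x]) (by simp) (fun z hz => (hU z hz).1)
      have h0 : baseVal b ([] : List ℕ) = 0 := by rw [baseVal_eq_foldl]; simp
      omega
    | append_singleton w' y =>
      simp only [baseVal_append, baseVal_singleton, List.length_singleton, pow_one] at h
      have hx := hU x (by simp)
      have hy := hV y (by simp)
      have hb' : (0:ℤ) < b := by exact_mod_cast lt_of_le_of_lt (Nat.zero_le n) hb
      have hxb : (x:ℤ) < b := by exact_mod_cast lt_of_le_of_lt hx.2 hb
      have hyb : (y:ℤ) < b := by exact_mod_cast lt_of_le_of_lt hy.2 hb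
      have hx0 : (0:ℤ) ≤ x := by positivity
      have hy0 : (0:ℤ) ≤ y := by positivity
      have hxy : (x:ℤ) = y := by
        have h1 : (baseVal b w * b + x) % b = x := by
          rw [add_comm, Int.add_mul_emod_self_right, Int.emod_eq_of_lt hx0 hxb]
        have h2 : (baseVal b w' * b + y) % b = y := by
          rw [add_comm, Int.add_mul_emod_self_right, Int.emod_eq_of_lt hy0 hyb]
        rw [← h1, ← h2, h]
      have hww : baseVal b w = baseVal b w' := by
        have hm : baseVal b w * b = baseVal b w' * b := by omega
        exact mul_right_cancel₀ (ne_of_gt hb') hm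
      have hwe : w = w' :=
        ih w' (fun z hz => hU z (List.mem_append_left _ hz))
          (fun z hz => hV z (List.mem_append_left _ hz)) hww
      have hxe : x = y := by exact_mod_cast hxy
      rw [hwe, hxe]

lemma key_step (b : ℕ) (a c : ℤ) (u v : List ℕ) :
    !![a, c, (1:ℤ)] * patersonW b u v
      = !![a * (b:ℤ) ^ u.length + baseVal b u, c * (b:ℤ) ^ v.length + baseVal b v, 1] := by
  ext i j
  fin_cases i <;> fin_cases j <;>
    simp [patersonW, Matrix.mul_apply, Fin.sum_univ_three]

lemma main_prod (r b : ℕ) (u v : Fin r → List ℕ) (L : List (Fin r)) :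
    ∀ A C : List ℕ,
    !![baseVal b A, baseVal b C, (1:ℤ)] * (L.map fun i => patersonW b (u i) (v i)).prod
      = !![baseVal b (A ++ (L.map u).flatten), baseVal b (C ++ (L.map v).flatten), 1] := by
  induction L with
  | nil => simp
  | cons i L ih =>
    intro A C
    rw [List.map_cons, List.prod_cons, ← Matrix.mul_assoc, key_step, ← baseVal_append,
      ← baseVal_append, ih (A ++ u i) (C ++ v i), List.map_cons, List.map_cons,
      List.flatten_cons, List.flatten_cons, List.append_assoc, List.append_assoc]

/-- MPCP identity (4.37): with `α = ([u_1]_b, [v_1]_b, 1)`,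
`T = [1,-1,0; -1,1,0; 0,0,0]`, and any sequence of indices `i_2,…,i_k`,
`α · W(u_{i_2},v_{i_2}) ⋯ W(u_{i_k},v_{i_k}) · T = ([u]_b - [v]_b, [v]_b - [u]_b, 0)`
where `u = u_1 u_{i_2} ⋯ u_{i_k}` and `v = v_1 v_{i_2} ⋯ v_{i_k}`; this vector
vanishes iff `u = v`. -/
theorem mpcp_identity (r n b : ℕ) [NeZero r] (hb : n < b)
    (u v : Fin r → List ℕ)
    (hu : ∀ i, ∀ x ∈ u i, 1 ≤ x ∧ x ≤ n) (hv : ∀ i, ∀ x ∈ v i, 1 ≤ x ∧ x ≤ n)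
    (L : List (Fin r)) :
    let T : Matrix (Fin 3) (Fin 3) ℤ := !![1, -1, 0; -1, 1, 0; 0, 0, 0]
    let U : List ℕ := u 0 ++ (L.map u).flatten
    let V : List ℕ := v 0 ++ (L.map v).flatten
    !![baseVal b (u 0), baseVal b (v 0), (1 : ℤ)]
        * (L.map fun i => patersonW b (u i) (v i)).prod * T
      = !![baseVal b U - baseVal b V, baseVal b V - baseVal b U, 0] ∧
    (!![baseVal b U - baseVal b V, baseVal b V - baseVal b U, (0 : ℤ)] = 0 ↔ U = V) := by
  intro T U V
  constructor
  · rw [main_prod r b u v L (u 0) (v 0)]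
    ext i j
    fin_cases i <;> fin_cases j <;>
      simp [T, U, V, Matrix.mul_apply, Fin.sum_univ_three] <;> ring
  · constructor
    · intro h
      have h00 : baseVal b U - baseVal b V = 0 := by
        have := congrFun (congrFun h 0) 0
        simpa using this
      refine baseVal_inj n b hb U V ?_ ?_ (by omega)
      · intro x hx
        simp only [U, List.mem_append, List.mem_flatten] at hx
        rcases hx with hx | ⟨l, hl, hx⟩
        · exact hu 0 x hx
        · simp only [List.mem_map] at hl
          obtain ⟨i, _, rfl⟩ := hl
          exact hu i x hx
      · intro x hx
        simp only [V, List.mem_append, List.mem_flatten] at hx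
        rcases hx with hx | ⟨l, hl, hx⟩
        · exact hv 0 x hx
        · simp only [List.mem_map] at hl
          obtain ⟨i, _, rfl⟩ := hl
          exact hv i x hx
    · intro h
      rw [h]
      ext i j
      fin_cases i <;> fin_cases j <;> simp
end

section
/- The tropical semiring N_min = (N ∪ {+∞}, min, +) is separated by morphisms of finite image: for every γ ∈ N ∪ {+∞}, there is a finite semiring S_γ and a semiring morphism π_γ : N_min → S_γ with π_γ^{-1}(π_γ(γ)) = {γ}. Specifically, choosing any natural number m with m > γ when γ ∈ N (or m = 1 when γ = +∞), the relation identifying all natural numbers ≥ m (and keeping +∞ separate) is a semiring congruence on N_min, the quotient is finite, and the quotient map separates γ. -/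
/-!
Identifying all naturals `≥ m` is the kernel of the capping map `n ↦ min n m`, `⊤ ↦ ⊤`, whose
image `{0, …, m, ⊤}` is finite. Capping is monotone, hence commutes with `min`, and the cap of a
sum depends only on the caps of the summands, so the kernel is a congruence of `N_min`. Its class
of `γ` is a singleton when `γ < m` or `γ = ⊤`.
-/

open Tropical

def capAt (m : ℕ) : WithTop ℕ → WithTop (Fin (m + 1)) :=
  WithTop.map fun n => ⟨min n m, Nat.lt_succ_of_le (min_le_right n m)⟩

section
variable {m : ℕ}

@[simp]
lemma capAt_coe (n : ℕ) :
    capAt m n = ((⟨min n m, Nat.lt_succ_of_le (min_le_right n m)⟩ : Fin (m + 1)) : WithTop _) :=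
  rfl

@[simp]
lemma capAt_top : capAt m ⊤ = ⊤ := rfl

lemma monotone_capAt : Monotone (capAt m) :=
  WithTop.monotone_map_iff.2 fun _ _ h => Fin.mk_le_mk.2 (min_le_min_right m h)

lemma capAt_min (a b : WithTop ℕ) : capAt m (min a b) = min (capAt m a) (capAt m b) :=
  monotone_capAt.map_min

lemma capAt_eq_capAt_iff {a b : WithTop ℕ} :
    capAt m a = capAt m b ↔ a = b ∨ ∃ j k : ℕ, m ≤ j ∧ m ≤ k ∧ a = j ∧ b = k := by
  induction a <;> induction b <;> simp [Fin.ext_iff]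
  omega

lemma capAt_add_congr {a a' b b' : WithTop ℕ} (ha : capAt m a = capAt m a')
    (hb : capAt m b = capAt m b') : capAt m (a + b) = capAt m (a' + b') := by
  induction a <;> induction a' <;> induction b <;> induction b' <;>
    simp_all only [ENat.some_eq_natCast, ← Nat.cast_add, capAt_coe, capAt_top, WithTop.coe_inj,
      Fin.ext_iff, WithTop.coe_ne_top, WithTop.top_ne_coe, add_top, top_add]
  omega

end

def capCon (m : ℕ) : RingCon (Tropical (WithTop ℕ)) where
  toSetoid := Setoid.ker (capAt m ∘ untrop)
  add' h₁ h₂ := by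
    simp_all only [Setoid.ker_def, Function.comp_apply, untrop_add, capAt_min]
  mul' h₁ h₂ := by
    simpa only [Setoid.ker_def, Function.comp_apply, untrop_mul] using capAt_add_congr h₁ h₂

lemma capCon_iff {m : ℕ} {x y : Tropical (WithTop ℕ)} :
    capCon m x y ↔ x = y ∨ ∃ j k : ℕ, m ≤ j ∧ m ≤ k ∧
      x = trop (j : WithTop ℕ) ∧ y = trop (k : WithTop ℕ) := by
  change capAt m (untrop x) = capAt m (untrop y) ↔ _
  simp only [capAt_eq_capAt_iff, untrop_eq_iff_eq_trop, trop_untrop]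

instance (m : ℕ) : Finite (capCon m).Quotient :=
  Finite.of_injective _ (Setoid.kerLift_injective (capAt m ∘ untrop))

/-- The tropical semiring `N_min = (ℕ ∪ {+∞}, min, +)` is separated by
morphisms of finite image. Specifically: given `γ` and a natural number `m`
with `m > γ` when `γ` is a natural number (or `m = 1` when `γ = +∞`), the
relation identifying all the natural numbers `≥ m` (and keeping `+∞` separate)
is a semiring congruence on `N_min`, its quotient is finite, and the quotient
morphism separates `γ`. -/
theorem tropical_separated (γ : Tropical (WithTop ℕ)) (m : ℕ)
    (hm : (∃ k : ℕ, γ = trop (k : WithTop ℕ) ∧ k < m) ∨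
      (γ = trop (⊤ : WithTop ℕ) ∧ m = 1)) :
    ∃ c : RingCon (Tropical (WithTop ℕ)),
      (∀ x y : Tropical (WithTop ℕ),
        c x y ↔ (x = y ∨ ∃ j k : ℕ, m ≤ j ∧ m ≤ k ∧
          x = trop (j : WithTop ℕ) ∧ y = trop (k : WithTop ℕ))) ∧
      Finite c.Quotient ∧
      (∀ x : Tropical (WithTop ℕ), c x γ → x = γ) := by
  refine ⟨capCon m, fun x y => capCon_iff, inferInstance, fun x hx => ?_⟩
  rcases capCon_iff.1 hx with h | ⟨j, k, -, hk, -, rfl⟩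
  · exact h
  · rcases hm with ⟨k', hk', hlt⟩ | ⟨hγ, -⟩
    · have hk_eq : k = k' := by simpa using hk'
      omega
    · simpa using trop_injective hγ
end
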